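/- For pointed Σ-labelled rooted trees T1 and T2, one has T1 ≤ T2 and T2 ≤ T1 if and only if the reduced form of T1 equals the reduced form of T2; that is, reduction selects a canonical member of every ≤-equivalence class. -/

import Mathlib

inductive PreTree (α : Type) : Type
  | node : Bool → List (α × PreTree α) → PreTree α

namespace PreTree

variable {α : Type}

def mark : PreTree α → Bool
  | node b _ => b

def children : PreTree α → List (α × PreTree α)
  | node _ cs => cs

def le : PreTree α → PreTree α → Prop
  | node b₁ c₁, node b₂ c₂ =>
      (b₂ = true → b₁ = true) ∧
      ∀ q, q ∈ c₂ → ∃ p, p ∈ c₁ ∧ p.1 = q.1 ∧ le p.2 q.2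
termination_by _ t₂ => sizeOf t₂
decreasing_by
  have h := List.sizeOf_lt_of_mem ‹q ∈ c₂›
  obtain ⟨qa, qt⟩ := q
  simp at h ⊢
  omega

-- The reduced form of a tree: reduce all child subtrees, then for each
-- label keep only the `≤`-minimal attached subtrees.
open scoped Classical in
noncomputable def reduce : PreTree α → PreTree α
  | node b cs =>
      let cs' : List (α × PreTree α) := cs.attach.map fun p => (p.1.1, reduce p.1.2)
      node b (cs'.filter fun q =>
        decide (∀ q' ∈ cs', q'.1 = q.1 → le q'.2 q.2 → le q.2 q'.2))
termination_by t => sizeOf t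
decreasing_by
  have h := List.sizeOf_lt_of_mem p.2
  obtain ⟨⟨pa, pt⟩, hp⟩ := p
  simp at h ⊢
  omega

/-- A tree is reduced if it equals its reduced form. -/
def Reduced (T : PreTree α) : Prop := reduce T = T

/-- The number of marked (point) vertices of a tree. -/
def markCount : PreTree α → ℕ
  | node b cs => (cond b 1 0) + (cs.attach.map fun p => markCount p.1.2).sum
termination_by t => sizeOf t
decreasing_by
  have h := List.sizeOf_lt_of_mem p.2
  obtain ⟨⟨pa, pt⟩, hp⟩ := p
  simp at h ⊢
  omega

/-- A pointed tree: exactly one vertex is marked as the point. -/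
def Pointed (T : PreTree α) : Prop := markCount T = 1

/-- Remove all point marks. -/
def unmark : PreTree α → PreTree α
  | node _ cs => node false (cs.attach.map fun p => (p.1.1, unmark p.1.2))
termination_by t => sizeOf t
decreasing_by
  have h := List.sizeOf_lt_of_mem p.2
  obtain ⟨⟨pa, pt⟩, hp⟩ := p
  simp at h ⊢
  omega

/-- Graft the tree `S` onto the point of `T` (identifying the point of `T`
with the root of `S`); the marks of `S` determine the new point. -/
def graft (S : PreTree α) : PreTree α → PreTree α
  | node b cs =>
      if b then node S.mark (cs ++ S.children)
      else node b (cs.attach.map fun p => (p.1.1, graft S p.1.2))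
termination_by t => sizeOf t
decreasing_by
  have h := List.sizeOf_lt_of_mem p.2
  obtain ⟨⟨pa, pt⟩, hp⟩ := p
  simp at h ⊢
  omega

/-- Move the point of `T` to its root. -/
def pointAtRoot (T : PreTree α) : PreTree α := node true (unmark T).children

/-- Pointed tree concatenation `T ∘ S`. -/
noncomputable def concat (T S : PreTree α) : PreTree α := reduce (graft S T)

/-- The domain operation `D(T)` on pointed trees. -/
noncomputable def domTree (T : PreTree α) : PreTree α := reduce (pointAtRoot T)

/-- The trivial pointed tree: one vertex, both root and point. -/
def trivialTree : PreTree α := node true []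

/-- The two-vertex pointed tree with a single `a`-labelled edge, point at the child. -/
def arrow (a : α) : PreTree α := node false [(a, node true [])]


/-- Set-theoretic equality of trees (children lists regarded as sets). -/
def eqv : PreTree α → PreTree α → Prop
  | node b₁ c₁, node b₂ c₂ =>
      b₁ = b₂ ∧
      (∀ p, p ∈ c₁ → ∃ q, q ∈ c₂ ∧ p.1 = q.1 ∧ eqv p.2 q.2) ∧
      (∀ q, q ∈ c₂ → ∃ p : {x // x ∈ c₁}, p.1.1 = q.1 ∧ eqv p.1.2 q.2)
termination_by t₁ _ => sizeOf t₁
decreasing_by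
  · have h₁ := List.sizeOf_lt_of_mem ‹p ∈ c₁›
    obtain ⟨pa, pt⟩ := p
    simp at h₁ ⊢
    omega
  · have h₁ := List.sizeOf_lt_of_mem p.2
    obtain ⟨⟨pa, pt⟩, hp⟩ := p
    simp at h₁ ⊢
    omega


/-- The subtree of `T` at position `p` (a list of child indices), if it exists. -/
def subAt : List ℕ → PreTree α → Option (PreTree α)
  | [], t => some t
  | i :: is, node _ cs => (cs[i]?).bind fun p => subAt is p.2

/-- `p` is a vertex of `T`. -/
def IsVertex (T : PreTree α) (p : List ℕ) : Prop := ∃ t, subAt p T = some t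

/-- The vertex `p` of `T` is the point (is marked). -/
def IsPoint (T : PreTree α) (p : List ℕ) : Prop :=
  ∃ t, subAt p T = some t ∧ t.mark = true

/-- There is an `a`-labelled edge of `T` from vertex `p` (the parent) to
vertex `q` (the child). -/
def Edge (T : PreTree α) (a : α) (p q : List ℕ) : Prop :=
  ∃ c, subAt p T = some c ∧ ∃ i t, c.children[i]? = some (a, t) ∧ q = p ++ [i]

theorem root_isVertex (T : PreTree α) : IsVertex T [] := ⟨T, rfl⟩

/-- A homomorphism of pointed labelled rooted trees from `S` to `T`:
a map of vertices preserving the labelled edge relations, sending the root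
to the root and points to points. -/
def HomTree (S T : PreTree α) : Prop :=
  ∃ θ : List ℕ → List ℕ,
    θ [] = [] ∧
    (∀ p, IsVertex S p → IsVertex T (θ p)) ∧
    (∀ a p q, Edge S a p q → Edge T a (θ p) (θ q)) ∧
    (∀ p, IsPoint S p → IsPoint T (θ p))

/-- A homomorphism of the pointed tree `T`, viewed as a relational structure,
into the relational structure `(X, f)`, mapping the root of `T` to `x` and
the point of `T` to `y`. -/
def HomInto {X : Type} (T : PreTree α) (f : α → X → X → Prop) (x y : X) : Prop :=
  ∃ θ : List ℕ → X,
    θ [] = x ∧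
    (∀ a p q, Edge T a p q → f a (θ p) (θ q)) ∧
    (∀ p, IsPoint T p → θ p = y)


end PreTree

namespace FreeKAD

/-- Terms of the signature `{∘, 1, D}`. -/
inductive Term1 (α : Type) : Type
  | var : α → Term1 α
  | one : Term1 α
  | comp : Term1 α → Term1 α → Term1 α
  | dom : Term1 α → Term1 α

/-- Terms of the signature `{∘, +, *, 0, 1, D}` (Kleene algebra with domain). -/
inductive TermK (α : Type) : Type
  | var : α → TermK α
  | zero : TermK α
  | one : TermK α
  | comp : TermK α → TermK α → TermK α
  | add : TermK α → TermK α → TermK α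
  | star : TermK α → TermK α
  | dom : TermK α → TermK α

variable {α : Type}

/-- The relational interpretation of a `{∘, 1, D}`-term over a set `X`,
under an assignment `f` of binary relations on `X` to the variables. -/
def rinterp1 {X : Type} (f : α → X → X → Prop) : Term1 α → X → X → Prop
  | .var a => f a
  | .one => fun x y => x = y
  | .comp s t => fun x y => ∃ z, rinterp1 f s x z ∧ rinterp1 f t z y
  | .dom s => fun x y => x = y ∧ ∃ z, rinterp1 f s x z

/-- The relational interpretation of a `{∘, +, *, 0, 1, D}`-term over a set `X`,
under an assignment `f` of binary relations on `X` to the variables. -/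
def rinterpK {X : Type} (f : α → X → X → Prop) : TermK α → X → X → Prop
  | .var a => f a
  | .zero => fun _ _ => False
  | .one => fun x y => x = y
  | .comp s t => fun x y => ∃ z, rinterpK f s x z ∧ rinterpK f t z y
  | .add s t => fun x y => rinterpK f s x y ∨ rinterpK f t x y
  | .star s => Relation.ReflTransGen (rinterpK f s)
  | .dom s => fun x y => x = y ∧ ∃ z, rinterpK f s x z

/-- Composition of binary relations. -/
def relComp {X : Type} (R S : X → X → Prop) : X → X → Prop :=
  fun x y => ∃ z, R x z ∧ S z y

/-- Union of binary relations. -/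
def relUnion {X : Type} (R S : X → X → Prop) : X → X → Prop :=
  fun x y => R x y ∨ S x y

/-- The domain operation on binary relations. -/
def relDom {X : Type} (R : X → X → Prop) : X → X → Prop :=
  fun x y => x = y ∧ ∃ z, R x z

/-- The identity relation. -/
def relId {X : Type} : X → X → Prop := fun x y => x = y

/-- The empty relation. -/
def relEmpty {X : Type} : X → X → Prop := fun _ _ => False

end FreeKAD

namespace FreeKAD

open PreTree

variable {α : Type}

/-- The single-tree interpretation of `{∘, 1, D}`-terms. -/
noncomputable def interp1 : Term1 α → PreTree α
  | .var a => arrow a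
  | .one => trivialTree
  | .comp s t => concat (interp1 s) (interp1 t)
  | .dom s => domTree (interp1 s)

/-- The set of `≤`-maximal elements of a set of trees. -/
def maximalSet (K : Set (PreTree α)) : Set (PreTree α) :=
  {T | T ∈ K ∧ ∀ S ∈ K, le T S → le S T}

/-- Elementwise lifting of pointed tree concatenation to sets of trees. -/
def liftComp (K L : Set (PreTree α)) : Set (PreTree α) :=
  {U | ∃ T ∈ K, ∃ S ∈ L, U = concat T S}

/-- Elementwise lifting of the domain operation to sets of trees. -/
def liftDom (K : Set (PreTree α)) : Set (PreTree α) :=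
  {U | ∃ T ∈ K, U = domTree T}

/-- Iterated lifted concatenation: `K^0 = {trivial}`, `K^(i+1) = K^i ∘ K`. -/
def powC (K : Set (PreTree α)) : ℕ → Set (PreTree α)
  | 0 => {trivialTree}
  | i + 1 => liftComp (powC K i) K

/-- The standard tree interpretation of `{∘, +, *, 0, 1, D}`-terms. -/
def sinterp : TermK α → Set (PreTree α)
  | .var a => {arrow a}
  | .zero => ∅
  | .one => {trivialTree}
  | .comp s t => maximalSet (liftComp (sinterp s) (sinterp t))
  | .add s t => maximalSet (sinterp s ∪ sinterp t)
  | .star s => maximalSet (⋃ i : ℕ, powC (sinterp s) (i + 1))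
  | .dom s => maximalSet (liftDom (sinterp s))

/-- Equality of sets of trees, with trees compared as (hereditarily finite) sets. -/
def SetEqv (K L : Set (PreTree α)) : Prop :=
  (∀ T ∈ K, ∃ S ∈ L, eqv T S) ∧ (∀ S ∈ L, ∃ T ∈ K, eqv T S)

/-- A set of reduced pointed trees is regular if it is the standard tree
interpretation of some `{∘, +, *, 0, 1, D}`-term. -/
def Regular (L : Set (PreTree α)) : Prop := ∃ t : TermK α, L = sinterp t

/-- The set of reduced trees lying `≤`-below some member of `L`. -/
def down (L : Set (PreTree α)) : Set (PreTree α) :=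
  {T | Reduced T ∧ ∃ S ∈ L, le T S}

end FreeKAD

/-!
Write `T ≡ S` for `T ≤ S ∧ S ≤ T`. Reduction keeps, label by label, the reductions of the
`≤`-minimal children, and by induction `reduce T ≡ T`. If `T ≡ S`, a minimal `a`-child `s` of `T`
lies above some `a`-child of `S`, hence above a minimal one `t`, which lies above some `a`-child
`s'` of `T`; minimality of `s` forces `s ≡ t`. So equivalent trees have equivalent minimal
children, and induction makes their reduced forms equal. Conversely, equal reduced forms are
equivalent, hence so are the trees.
-/

namespace List

theorem exists_le_minimal_of_mem {β γ : Type*} [Preorder γ] {l : List (β × γ)} {a : β} {x : γ}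
    (h : (a, x) ∈ l) : ∃ y ≤ x, Minimal (fun y => (a, y) ∈ l) y :=
  (l.finite_toSet.preimage (Prod.mk_right_injective a).injOn).exists_le_minimal h

end List

namespace PreTree

variable {α : Type}

theorem sizeOf_lt_sizeOf_node_of_mem {b : Bool} {cs : List (α × PreTree α)} {p : α × PreTree α}
    (hp : p ∈ cs) : sizeOf p.2 < sizeOf (node b cs) := by
  have := List.sizeOf_lt_of_mem hp
  obtain ⟨a, t⟩ := p
  simp only [node.sizeOf_spec, Prod.mk.sizeOf_spec] at this ⊢
  omega

@[elab_as_elim]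
theorem ind {motive : PreTree α → Prop}
    (node : ∀ b cs, (∀ p ∈ cs, motive p.2) → motive (node b cs)) : ∀ T, motive T
  | .node b cs => node b cs fun p _ => ind node p.2
termination_by T => sizeOf T
decreasing_by simpa using sizeOf_lt_sizeOf_node_of_mem (b := b) ‹_›

instance : LE (PreTree α) := ⟨le⟩

theorem node_le_node {b₁ b₂ : Bool} {c₁ c₂ : List (α × PreTree α)} :
    node b₁ c₁ ≤ node b₂ c₂ ↔
      (b₂ = true → b₁ = true) ∧ ∀ q ∈ c₂, ∃ p ∈ c₁, p.1 = q.1 ∧ p.2 ≤ q.2 := by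
  change le _ _ ↔ _
  rw [le]
  rfl

protected theorem le_refl (T : PreTree α) : T ≤ T := by
  induction T using ind with
  | node b cs ih => exact node_le_node.2 ⟨id, fun q hq => ⟨q, hq, rfl, ih q hq⟩⟩

protected theorem le_trans {T₁ T₂ T₃ : PreTree α} (h₁₂ : T₁ ≤ T₂) (h₂₃ : T₂ ≤ T₃) : T₁ ≤ T₃ := by
  induction T₃ using ind generalizing T₁ T₂ with
  | node b₃ c₃ ih =>
    obtain ⟨b₁, c₁⟩ := T₁
    obtain ⟨b₂, c₂⟩ := T₂
    rw [node_le_node] at *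
    refine ⟨h₁₂.1 ∘ h₂₃.1, fun q hq => ?_⟩
    obtain ⟨p, hp, hpq, hple⟩ := h₂₃.2 q hq
    obtain ⟨r, hr, hrp, hrle⟩ := h₁₂.2 p hp
    exact ⟨r, hr, hrp.trans hpq, ih q hq hrle hple⟩

instance : Preorder (PreTree α) where
  le_refl := PreTree.le_refl
  le_trans _ _ _ := PreTree.le_trans

theorem reduce_node (b : Bool) (cs : List (α × PreTree α)) :
    reduce (node b cs) = node b (reduce (node b cs)).children := by
  rw [reduce]
  rfl

theorem mem_children_reduce_node {b : Bool} {cs : List (α × PreTree α)} {a : α}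
    {t : PreTree α} :
    (a, t) ∈ (reduce (node b cs)).children ↔
      Minimal (fun u => ∃ s, (a, s) ∈ cs ∧ reduce s = u) t := by
  rw [reduce]
  simp only [children, List.mem_filter, List.mem_map, List.mem_attach, true_and,
    Subtype.exists, decide_eq_true_eq, Minimal, Prod.mk.injEq, exists_prop, Prod.exists]
  constructor
  · rintro ⟨⟨_, s, hs, rfl, hst⟩, hmin⟩
    exact ⟨⟨s, hs, hst⟩, fun u ⟨s', hs', hu⟩ => hmin (_, u) ⟨_, s', hs', hu ▸ rfl⟩ rfl⟩
  · rintro ⟨⟨s, hs, hst⟩, hmin⟩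
    refine ⟨⟨a, s, hs, rfl, hst⟩, ?_⟩
    rintro _ ⟨a', s', hs', rfl⟩ rfl
    exact hmin ⟨s', hs', rfl⟩

theorem mem_children_reduce_node_iff_of_antisymmRel {b : Bool} {cs : List (α × PreTree α)}
    {a : α} {t : PreTree α} (hcs : ∀ p ∈ cs, AntisymmRel (· ≤ ·) (reduce p.2) p.2) :
    (a, t) ∈ (reduce (node b cs)).children ↔
      ∃ s, Minimal (fun s => (a, s) ∈ cs) s ∧ reduce s = t := by
  have hmono : ∀ ⦃x y⦄, (a, x) ∈ cs → (a, y) ∈ cs → (reduce x ≤ reduce y ↔ x ≤ y) :=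
    fun x y hx hy => (hcs _ hx).le_congr (hcs _ hy)
  rw [mem_children_reduce_node]
  exact (Set.ext_iff.1 (image_monotone_setOfPred_minimal hmono) t).symm

theorem antisymmRel_reduce (T : PreTree α) : AntisymmRel (· ≤ ·) (reduce T) T := by
  induction T using ind with
  | node b cs ih =>
    have hmem {a t} := mem_children_reduce_node_iff_of_antisymmRel (b := b) (a := a) (t := t) ih
    rw [reduce_node]
    constructor
    · refine node_le_node.2 ⟨id, fun ⟨a, s⟩ hs => ?_⟩
      obtain ⟨s', hs's, hs'⟩ := List.exists_le_minimal_of_mem hs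
      exact ⟨(a, reduce s'), hmem.2 ⟨s', hs', rfl⟩, rfl, (ih _ hs'.1).le.trans hs's⟩
    · refine node_le_node.2 ⟨id, fun ⟨a, t⟩ ht => ?_⟩
      obtain ⟨s, hs, rfl⟩ := hmem.1 ht
      exact ⟨(a, s), hs.1, rfl, (ih _ hs.1).ge⟩

theorem mem_children_reduce_node_iff {b : Bool} {cs : List (α × PreTree α)} {a : α}
    {t : PreTree α} :
    (a, t) ∈ (reduce (node b cs)).children ↔
      ∃ s, Minimal (fun s => (a, s) ∈ cs) s ∧ reduce s = t :=
  mem_children_reduce_node_iff_of_antisymmRel fun p _ => antisymmRel_reduce p.2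

theorem exists_minimal_antisymmRel_of_node {b₁ b₂ : Bool} {cs₁ cs₂ : List (α × PreTree α)}
    (h : AntisymmRel (· ≤ ·) (node b₁ cs₁) (node b₂ cs₂)) {a : α} {s : PreTree α}
    (hs : Minimal (fun s => (a, s) ∈ cs₁) s) :
    ∃ t, Minimal (fun t => (a, t) ∈ cs₂) t ∧ AntisymmRel (· ≤ ·) s t := by
  obtain ⟨-, h₁₂⟩ := node_le_node.1 h.le
  obtain ⟨-, h₂₁⟩ := node_le_node.1 h.ge
  obtain ⟨⟨_, t⟩, ht, rfl, hts⟩ := h₂₁ (a, s) hs.1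
  obtain ⟨t', ht't, ht'⟩ := List.exists_le_minimal_of_mem ht
  obtain ⟨⟨_, s'⟩, hs', rfl, hs't'⟩ := h₁₂ (_, t') ht'.1
  have hss' : s ≤ s' := hs.le_of_le hs' (hs't'.trans (ht't.trans hts))
  exact ⟨t', ht', hss'.trans hs't', ht't.trans hts⟩

theorem eqv_reduce_of_antisymmRel {T S : PreTree α} (h : AntisymmRel (· ≤ ·) T S) :
    eqv (reduce T) (reduce S) := by
  induction T using ind generalizing S with
  | node b₁ cs₁ ih =>
    obtain ⟨b₂, cs₂⟩ := S
    have hb : b₁ = b₂ :=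
      Bool.eq_iff_iff.2 ⟨(node_le_node.1 h.ge).1, (node_le_node.1 h.le).1⟩
    rw [reduce_node b₁ cs₁, reduce_node b₂ cs₂, eqv]
    refine ⟨hb, fun ⟨a, u⟩ hu => ?_, fun ⟨a, v⟩ hv => ?_⟩
    · obtain ⟨s, hs, rfl⟩ := mem_children_reduce_node_iff.1 hu
      obtain ⟨t, ht, hst⟩ := exists_minimal_antisymmRel_of_node h hs
      exact ⟨(a, reduce t), mem_children_reduce_node_iff.2 ⟨t, ht, rfl⟩, rfl, ih _ hs.1 hst⟩
    · obtain ⟨t, ht, rfl⟩ := mem_children_reduce_node_iff.1 hv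
      obtain ⟨s, hs, hts⟩ := exists_minimal_antisymmRel_of_node h.symm ht
      exact ⟨⟨(a, reduce s), mem_children_reduce_node_iff.2 ⟨s, hs, rfl⟩⟩, rfl, ih _ hs.1 hts.symm⟩

theorem antisymmRel_of_eqv {T S : PreTree α} (h : eqv T S) : AntisymmRel (· ≤ ·) T S := by
  induction T using ind generalizing S with
  | node b₁ cs₁ ih =>
    obtain ⟨b₂, cs₂⟩ := S
    rw [eqv] at h
    obtain ⟨rfl, h₁₂, h₂₁⟩ := h
    refine ⟨node_le_node.2 ⟨id, fun q hq => ?_⟩, node_le_node.2 ⟨id, fun p hp => ?_⟩⟩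
    · obtain ⟨⟨p, hp⟩, hpq, he⟩ := h₂₁ q hq
      exact ⟨p, hp, hpq, (ih p hp he).le⟩
    · obtain ⟨q, hq, hpq, he⟩ := h₁₂ p hp
      exact ⟨q, hq, hpq.symm, (ih p hp he).ge⟩

end PreTree

namespace FreeKAD
open PreTree

theorem mutual_le_iff_reduce_eq_general {α : Type} (T₁ T₂ : PreTree α) :
    (le T₁ T₂ ∧ le T₂ T₁) ↔ eqv (reduce T₁) (reduce T₂) :=
  ⟨eqv_reduce_of_antisymmRel, fun h =>
    ((antisymmRel_reduce T₁).symm.trans (antisymmRel_of_eqv h)).trans (antisymmRel_reduce T₂)⟩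

/-- For pointed `Σ`-labelled rooted trees `T₁` and `T₂`,
one has `T₁ ≤ T₂` and `T₂ ≤ T₁` if and only if the reduced form of `T₁`
equals the reduced form of `T₂` (equality of trees, whose children
collections are sets, is `eqv`): reduction selects a canonical member of
every `≤`-equivalence class. -/
theorem mutual_le_iff_reduce_eq {α : Type} (T₁ T₂ : PreTree α)
    (hp₁ : T₁.Pointed) (hp₂ : T₂.Pointed) :
    (le T₁ T₂ ∧ le T₂ T₁) ↔ eqv (reduce T₁) (reduce T₂) :=
  mutual_le_iff_reduce_eq_general T₁ T₂

end FreeKAD
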